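/- arXiv:1904.07957 — 4 statements merged into one kernel-verified Lean document; each statement's English description precedes it below -/
import Mathlib

section
/- The maximum-matching size function is 2-almost-smooth: for any ε ∈ (0,1) and pairwise disjoint edge sets A, B, C on a common vertex set, if ε·m(A ∪ B) ≤ m(B), then ε·m(A ∪ B ∪ C) ≤ 2·m(B ∪ C), where m(F) is the maximum matching size within edge set F. -/
/-! `m` is monotone and subadditive, so
`ε·m(A ∪ B ∪ C) ≤ ε·m(A ∪ B) + ε·m(C) ≤ m(B) + m(C) ≤ 2·m(B ∪ C)`. -/

/-- A set of edges is a matching if its edges are pairwise vertex-disjoint. -/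
def IsMatching {V : Type*} (M : Finset (Sym2 V)) : Prop :=
  ∀ e ∈ M, ∀ f ∈ M, e ≠ f → ∀ v ∈ e, v ∉ f

open Classical in
/-- `matchNum F` is the maximum size of a matching using only edges from `F`. -/
noncomputable def matchNum {V : Type*} (F : Finset (Sym2 V)) : ℕ :=
  (F.powerset.filter fun M => IsMatching M).sup Finset.card

theorem IsMatching.subset {V : Type*} {M N : Finset (Sym2 V)} (hM : IsMatching M) (hNM : N ⊆ M) :
    IsMatching N :=
  fun e he f hf => hM e (hNM he) f (hNM hf)

theorem IsMatching.card_le_matchNum {V : Type*} {M F : Finset (Sym2 V)} (hM : IsMatching M)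
    (hMF : M ⊆ F) : M.card ≤ matchNum F := by
  classical
  exact Finset.le_sup (f := Finset.card) (Finset.mem_filter.mpr ⟨Finset.mem_powerset.mpr hMF, hM⟩)

theorem matchNum_le {V : Type*} {F : Finset (Sym2 V)} {n : ℕ}
    (h : ∀ M ⊆ F, IsMatching M → M.card ≤ n) : matchNum F ≤ n := by
  classical
  refine Finset.sup_le fun M hM => ?_
  rw [Finset.mem_filter, Finset.mem_powerset] at hM
  exact h M hM.1 hM.2

theorem matchNum_mono {V : Type*} {F G : Finset (Sym2 V)} (h : F ⊆ G) :
    matchNum F ≤ matchNum G :=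
  matchNum_le fun _ hMF hM => hM.card_le_matchNum (hMF.trans h)

theorem matchNum_union_le {V : Type*} [DecidableEq V] (F G : Finset (Sym2 V)) :
    matchNum (F ∪ G) ≤ matchNum F + matchNum G := by
  refine matchNum_le fun M hMFG hM => ?_
  have hF : (M ∩ F).card ≤ matchNum F :=
    (hM.subset Finset.inter_subset_left).card_le_matchNum Finset.inter_subset_right
  have hG : (M \ F).card ≤ matchNum G :=
    (hM.subset Finset.sdiff_subset).card_le_matchNum fun e he => by
      have := Finset.mem_sdiff.mp he
      exact (Finset.mem_union.mp (hMFG this.1)).resolve_left this.2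
  rw [← Finset.card_inter_add_card_sdiff M F]
  exact Nat.add_le_add hF hG

theorem matchNum_almost_smooth_general {V : Type*} [DecidableEq V]
    (ε : ℝ) (hε : 0 < ε) (hε1 : ε < 1)
    (A B C : Finset (Sym2 V))
    (h : ε * (matchNum (A ∪ B) : ℝ) ≤ (matchNum B : ℝ)) :
    ε * (matchNum (A ∪ B ∪ C) : ℝ) ≤ 2 * (matchNum (B ∪ C) : ℝ) := by
  have hsub : (matchNum (A ∪ B ∪ C) : ℝ) ≤ matchNum (A ∪ B) + matchNum C := by
    exact_mod_cast matchNum_union_le (A ∪ B) C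
  have hB : (matchNum B : ℝ) ≤ matchNum (B ∪ C) := by
    exact_mod_cast matchNum_mono Finset.subset_union_left
  have hC : (matchNum C : ℝ) ≤ matchNum (B ∪ C) := by
    exact_mod_cast matchNum_mono Finset.subset_union_right
  calc ε * (matchNum (A ∪ B ∪ C) : ℝ)
      ≤ ε * matchNum (A ∪ B) + ε * matchNum C := by
        rw [← mul_add]; exact mul_le_mul_of_nonneg_left hsub hε.le
    _ ≤ matchNum B + matchNum C := by
        gcongr
        exact mul_le_of_le_one_left (Nat.cast_nonneg _) hε1.le
    _ ≤ 2 * matchNum (B ∪ C) := by linarith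

theorem matchNum_almost_smooth {V : Type*} [DecidableEq V]
    (ε : ℝ) (hε : 0 < ε) (hε1 : ε < 1)
    (A B C : Finset (Sym2 V))
    (hAB : Disjoint A B) (hBC : Disjoint B C) (hAC : Disjoint A C)
    (h : ε * (matchNum (A ∪ B) : ℝ) ≤ (matchNum B : ℝ)) :
    ε * (matchNum (A ∪ B ∪ C) : ℝ) ≤ 2 * (matchNum (B ∪ C) : ℝ) :=
  matchNum_almost_smooth_general ε hε hε1 A B C h
end

section
/- The minimum vertex-cover size function is 2-almost-smooth: for any ε ∈ (0,1) and pairwise disjoint edge sets A, B, C on a common vertex set, if ε·VC(A ∪ B) ≤ VC(B), then ε·VC(A ∪ B ∪ C) ≤ 2·VC(B ∪ C). -/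
/-!
Covers of `A ∪ B` and of `C` together cover `A ∪ B ∪ C`, so the vertex cover number is
subadditive; it is also monotone. For any monotone subadditive `f` and `0 ≤ ε ≤ 1`,
`ε f(A ∪ B ∪ C) ≤ ε f(A ∪ B) + f(C) ≤ f(B) + f(C) ≤ 2 f(B ∪ C)`.
-/

/-- `C` is a vertex cover of the edge set `F` if every edge of `F` has an
endpoint in `C`. -/
def IsCover {V : Type*} (C : Finset V) (F : Finset (Sym2 V)) : Prop :=
  ∀ e ∈ F, ∃ v ∈ C, v ∈ e

/-- `vcNum F` is the minimum size of a vertex cover of the edge set `F`. -/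
noncomputable def vcNum {V : Type*} (F : Finset (Sym2 V)) : ℕ :=
  sInf {n | ∃ C : Finset V, IsCover C F ∧ C.card = n}

theorem almost_smooth_of_monotone_of_subadditive {α : Type*} [DecidableEq α]
    (f : Finset α → ℕ) (hmono : Monotone f) (hsub : ∀ s t, f (s ∪ t) ≤ f s + f t)
    {ε : ℝ} (hε0 : 0 ≤ ε) (hε1 : ε ≤ 1) {A B C : Finset α}
    (h : ε * f (A ∪ B) ≤ f B) :
    ε * f (A ∪ B ∪ C) ≤ 2 * f (B ∪ C) :=
  calc ε * f (A ∪ B ∪ C)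
      ≤ ε * (f (A ∪ B) + f C) := by
        gcongr
        exact_mod_cast hsub _ _
    _ = ε * f (A ∪ B) + ε * f C := mul_add _ _ _
    _ ≤ f B + f C := add_le_add h (mul_le_of_le_one_left (Nat.cast_nonneg _) hε1)
    _ ≤ f (B ∪ C) + f (B ∪ C) := by
        gcongr <;> exact_mod_cast hmono (by simp)
    _ = 2 * f (B ∪ C) := (two_mul _).symm

namespace IsCover

variable {V : Type*} {C D : Finset V} {F G : Finset (Sym2 V)}

theorem mono (hC : IsCover C G) (hFG : F ⊆ G) : IsCover C F :=
  fun e he => hC e (hFG he)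

theorem union [DecidableEq V] (hC : IsCover C F) (hD : IsCover D G) :
    IsCover (C ∪ D) (F ∪ G) := by
  intro e he
  rcases Finset.mem_union.1 he with he | he
  · obtain ⟨v, hv, hve⟩ := hC e he
    exact ⟨v, Finset.mem_union_left _ hv, hve⟩
  · obtain ⟨v, hv, hve⟩ := hD e he
    exact ⟨v, Finset.mem_union_right _ hv, hve⟩

end IsCover

section vcNum

variable {V : Type*}

theorem exists_isCover_card_eq_vcNum [DecidableEq V] (F : Finset (Sym2 V)) :
    ∃ C : Finset V, IsCover C F ∧ C.card = vcNum F := by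
  have hne : {n | ∃ C : Finset V, IsCover C F ∧ C.card = n}.Nonempty :=
    ⟨_, F.image (fun e => e.out.1),
      fun e he => ⟨e.out.1, Finset.mem_image_of_mem _ he, Sym2.out_fst_mem e⟩, rfl⟩
  exact Nat.sInf_mem hne

theorem vcNum_le_card {F : Finset (Sym2 V)} {C : Finset V} (h : IsCover C F) :
    vcNum F ≤ C.card :=
  Nat.sInf_le ⟨C, h, rfl⟩

theorem vcNum_mono [DecidableEq V] : Monotone (vcNum : Finset (Sym2 V) → ℕ) := by
  intro F G hFG
  obtain ⟨C, hC, hcard⟩ := exists_isCover_card_eq_vcNum G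
  exact hcard ▸ vcNum_le_card (hC.mono hFG)

theorem vcNum_union_le [DecidableEq V] (F G : Finset (Sym2 V)) :
    vcNum (F ∪ G) ≤ vcNum F + vcNum G := by
  obtain ⟨C, hC, hCcard⟩ := exists_isCover_card_eq_vcNum F
  obtain ⟨D, hD, hDcard⟩ := exists_isCover_card_eq_vcNum G
  calc vcNum (F ∪ G) ≤ (C ∪ D).card := vcNum_le_card (hC.union hD)
    _ ≤ C.card + D.card := Finset.card_union_le _ _
    _ = vcNum F + vcNum G := by rw [hCcard, hDcard]

end vcNum

theorem vcNum_almost_smooth_general {V : Type*} [DecidableEq V]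
    (ε : ℝ) (hε : 0 < ε) (hε1 : ε < 1)
    (A B C : Finset (Sym2 V))
    (h : ε * (vcNum (A ∪ B) : ℝ) ≤ (vcNum B : ℝ)) :
    ε * (vcNum (A ∪ B ∪ C) : ℝ) ≤ 2 * (vcNum (B ∪ C) : ℝ) :=
  almost_smooth_of_monotone_of_subadditive vcNum vcNum_mono vcNum_union_le
    hε.le hε1.le h

theorem vcNum_almost_smooth {V : Type*} [DecidableEq V]
    (ε : ℝ) (hε : 0 < ε) (hε1 : ε < 1)
    (A B C : Finset (Sym2 V))
    (hAB : Disjoint A B) (hBC : Disjoint B C) (hAC : Disjoint A C)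
    (h : ε * (vcNum (A ∪ B) : ℝ) ≤ (vcNum B : ℝ)) :
    ε * (vcNum (A ∪ B ∪ C) : ℝ) ≤ 2 * (vcNum (B ∪ C) : ℝ) :=
  vcNum_almost_smooth_general ε hε hε1 A B C h
end

section
/- The function E*_α is subadditive over stream concatenation: for disjoint consecutive segments A and B of an edge stream, E*_α(AB) ≤ E*_α(A) + E*_α(B), where E*_α(S) is the maximum over prefixes S_t of S of the number of α-good edges in S_t. -/
/-- The number of edges strictly after position `i` in the stream `S` that are
incident to the vertex `v`. -/
def laterDeg {V : Type*} [DecidableEq V] (S : List (Sym2 V)) (i : ℕ) (v : V) : ℕ :=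
  ((S.drop (i + 1)).filter fun e => v ∈ e).length

open Classical in
/-- The positions of the α-good edges of the stream `S`: edge `e_i` is α-good
if each of its endpoints is incident to at most `α` edges occurring strictly
after position `i`. -/
noncomputable def goodIndices {V : Type*} [DecidableEq V] (α : ℕ) (S : List (Sym2 V)) : Finset ℕ :=
  (Finset.range S.length).filter fun i =>
    ∀ e : Sym2 V, S[i]? = some e → ∀ v ∈ e, laterDeg S i v ≤ α

/-- `Estar α S` is the maximum, over prefixes `S_t` of `S`, of the number of
α-good edges of `S_t`. -/
noncomputable def Estar {V : Type*} [DecidableEq V] (α : ℕ) (S : List (Sym2 V)) : ℕ :=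
  (Finset.range (S.length + 1)).sup fun t => (goodIndices α (S.take t)).card

/-!
An edge of `A` that is α-good in `AB` is α-good in `A`, since dropping `B` only removes later
edges; an edge of `B` sees the same later edges in `AB` as in `B`. Hence the good edges of `AB`
number at most those of `A` plus those of `B`. A prefix of `AB` is either a prefix of `A`, or
`A` followed by a prefix of `B`, and `Estar α A` dominates the count for the whole of `A`.
-/

section Stream

variable {V : Type*} [DecidableEq V]

lemma laterDeg_le_laterDeg_append (A C : List (Sym2 V)) (i : ℕ) (v : V) :
    laterDeg A i v ≤ laterDeg (A ++ C) i v := by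
  simp only [laterDeg, List.drop_append, List.filter_append, List.length_append]
  omega

lemma laterDeg_append_length_add (A C : List (Sym2 V)) (j : ℕ) (v : V) :
    laterDeg (A ++ C) (A.length + j) v = laterDeg C j v := by
  have hA : A.drop (A.length + j + 1) = [] := List.drop_eq_nil_of_le (by omega)
  have hC : A.length + j + 1 - A.length = j + 1 := by omega
  simp only [laterDeg, List.drop_append, hA, hC, List.nil_append]

lemma goodIndices_append_subset (α : ℕ) (A C : List (Sym2 V)) :
    goodIndices α (A ++ C) ⊆ goodIndices α A ∪ (goodIndices α C).image (A.length + ·) := by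
  intro i hi
  simp only [goodIndices, Finset.mem_filter, Finset.mem_range, List.length_append] at hi
  obtain ⟨hlen, hgood⟩ := hi
  rcases lt_or_ge i A.length with hiA | hiA
  · refine Finset.mem_union_left _ ?_
    simp only [goodIndices, Finset.mem_filter, Finset.mem_range]
    refine ⟨hiA, fun e he v hv => ?_⟩
    have he' : (A ++ C)[i]? = some e := by rwa [List.getElem?_append_left hiA]
    exact (laterDeg_le_laterDeg_append A C i v).trans (hgood e he' v hv)
  · obtain ⟨j, rfl⟩ := Nat.exists_eq_add_of_le hiA
    refine Finset.mem_union_right _ (Finset.mem_image_of_mem _ ?_)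
    simp only [goodIndices, Finset.mem_filter, Finset.mem_range]
    refine ⟨by omega, fun e he v hv => ?_⟩
    have he' : (A ++ C)[A.length + j]? = some e := by
      rwa [List.getElem?_append_right hiA, Nat.add_sub_cancel_left]
    simpa only [laterDeg_append_length_add] using hgood e he' v hv

lemma card_goodIndices_append_le (α : ℕ) (A C : List (Sym2 V)) :
    (goodIndices α (A ++ C)).card ≤ (goodIndices α A).card + (goodIndices α C).card :=
  calc (goodIndices α (A ++ C)).card
      ≤ (goodIndices α A ∪ (goodIndices α C).image (A.length + ·)).card :=
        Finset.card_le_card (goodIndices_append_subset α A C)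
    _ ≤ (goodIndices α A).card + ((goodIndices α C).image (A.length + ·)).card :=
        Finset.card_union_le _ _
    _ ≤ (goodIndices α A).card + (goodIndices α C).card :=
        Nat.add_le_add_left Finset.card_image_le _

lemma card_goodIndices_take_le_Estar (α : ℕ) (S : List (Sym2 V)) {t : ℕ} (ht : t ≤ S.length) :
    (goodIndices α (S.take t)).card ≤ Estar α S :=
  Finset.le_sup (f := fun t : ℕ => (goodIndices α (S.take t)).card)
    (Finset.mem_range.2 (Nat.lt_succ_of_le ht))

lemma card_goodIndices_le_Estar (α : ℕ) (S : List (Sym2 V)) :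
    (goodIndices α S).card ≤ Estar α S := by
  simpa using card_goodIndices_take_le_Estar α S le_rfl

end Stream

theorem Estar_subadditive_general {V : Type*} [DecidableEq V] (α : ℕ)
    (A B : List (Sym2 V)) :
    Estar α (A ++ B) ≤ Estar α A + Estar α B := by
  refine Finset.sup_le fun t ht => ?_
  rw [Finset.mem_range, List.length_append] at ht
  rcases le_or_gt t A.length with htA | htA
  · rw [List.take_append_of_le_length htA]
    exact (card_goodIndices_take_le_Estar α A htA).trans (Nat.le_add_right _ _)
  · have htake : (A ++ B).take t = A ++ B.take (t - A.length) := by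
      rw [List.take_append, List.take_of_length_le htA.le]
    rw [htake]
    calc (goodIndices α (A ++ B.take (t - A.length))).card
        ≤ (goodIndices α A).card + (goodIndices α (B.take (t - A.length))).card :=
          card_goodIndices_append_le α A _
      _ ≤ Estar α A + Estar α B :=
          add_le_add (card_goodIndices_le_Estar α A)
            (card_goodIndices_take_le_Estar α B (by omega))

theorem Estar_subadditive {V : Type*} [DecidableEq V] (α : ℕ)
    (A B : List (Sym2 V)) (hdisj : A.Disjoint B) :
    Estar α (A ++ B) ≤ Estar α A + Estar α B :=
  Estar_subadditive_general α A B
end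

section
/- Approximation-ratio sandwich in the almost-smooth histogram: let f be a non-negative function on streams that is c-left-monotone (f(Y) ≤ c·f(XY) for disjoint segments X,Y) and (c,d)-almost-smooth, and let Λ be a C-approximation of f in the sense f(X) ≤ Λ(X) ≤ (1+ε)C·f(X). Suppose disjoint segments B₁' ⊇ B₂' and suffix D satisfy (1−ε)Λ(B₁') < Λ(B₂'), B₁ = B₁'D, B₂ = B₂'D, and the window W satisfies B₂ ⊆ W ⊆ B₁. Then (1/(cC(1+ε)))·Λ(B₂) ≤ f(W) ≤ cdC·((1+ε)/(1−ε)²)·Λ(B₂). -/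
/-! Since `f ≤ Λ ≤ K f` with `K = (1 + ε) C`, closeness of `Λ` on `B₁'` and `B₂'` gives the
premise `ε' f(B₁') ≤ f(B₂')` of almost-smoothness with `ε' = (1 - ε) / K`; appending `D` then
bounds `f(B₁)` by `(d / ε') Λ(B₂)`, and left-monotonicity places `f(W)` between `f(B₂) / c` and
`c f(B₁)`. -/

section

variable {E : Type*} {f Λ : List E → ℝ} {K ε : ℝ}

theorem div_mul_le_of_approx_close (hK : 0 < K) (hε : ε ≤ 1)
    (happrox : ∀ X, f X ≤ Λ X ∧ Λ X ≤ K * f X) {X Y : List E}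
    (hclose : (1 - ε) * Λ (X ++ Y) < Λ Y) :
    (1 - ε) / K * f (X ++ Y) ≤ f Y := by
  rw [div_mul_eq_mul_div, div_le_iff₀ hK]
  calc (1 - ε) * f (X ++ Y) ≤ (1 - ε) * Λ (X ++ Y) :=
        mul_le_mul_of_nonneg_left (happrox _).1 (by linarith)
    _ ≤ Λ Y := hclose.le
    _ ≤ K * f Y := (happrox Y).2
    _ = f Y * K := mul_comm _ _

theorem le_div_mul_approx_of_close {d : ℝ} (hd : 0 ≤ d) (hK : 0 < K) (hε : ε < 1)
    (hsmooth : ∀ ε' : ℝ, 0 < ε' → ∀ X Y Z : List E,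
      ε' * f (X ++ Y) ≤ f Y → ε' * f (X ++ Y ++ Z) ≤ d * f (Y ++ Z))
    (happrox : ∀ X, f X ≤ Λ X ∧ Λ X ≤ K * f X) {X Y Z : List E}
    (hclose : (1 - ε) * Λ (X ++ Y) < Λ Y) :
    f (X ++ Y ++ Z) ≤ d * K / (1 - ε) * Λ (Y ++ Z) := by
  have h1ε : 0 < 1 - ε := by linarith
  have hsmooth_XYZ : (1 - ε) / K * f (X ++ Y ++ Z) ≤ d * f (Y ++ Z) :=
    hsmooth _ (div_pos h1ε hK) X Y Z (div_mul_le_of_approx_close hK hε.le happrox hclose)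
  calc f (X ++ Y ++ Z) = K / (1 - ε) * ((1 - ε) / K * f (X ++ Y ++ Z)) := by
        field_simp
    _ ≤ K / (1 - ε) * (d * Λ (Y ++ Z)) :=
        mul_le_mul_of_nonneg_left
          (hsmooth_XYZ.trans (mul_le_mul_of_nonneg_left (happrox _).1 hd))
          (div_pos hK h1ε).le
    _ = d * K / (1 - ε) * Λ (Y ++ Z) := by ring

end

theorem almost_smooth_histogram_sandwich {E : Type*}
    (f Λ : List E → ℝ) (c d C ε : ℝ)
    (hc : 1 ≤ c) (hd : 1 ≤ d) (hC : 1 ≤ C) (hε : 0 < ε) (hε2 : ε < 1 / 2)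
    (hnonneg : ∀ X : List E, 0 ≤ f X)
    -- `f` is c-left-monotone
    (hmono : ∀ X Y : List E, f Y ≤ c * f (X ++ Y))
    -- `f` is (c,d)-almost-smooth
    (hsmooth : ∀ ε' : ℝ, 0 < ε' → ∀ X Y Z : List E,
      ε' * f (X ++ Y) ≤ f Y → ε' * f (X ++ Y ++ Z) ≤ d * f (Y ++ Z))
    -- `Λ` is a C-approximation of `f`
    (happrox : ∀ X : List E, f X ≤ Λ X ∧ Λ X ≤ (1 + ε) * C * f X)
    -- buckets: B₂' is a suffix of B₁' = P ++ B₂', D is the later part of the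
    -- stream, and the window W satisfies B₂ ⊆ W ⊆ B₁ (as suffixes)
    (P B₂' D Q R B₁ B₂ W : List E)
    (hB₁ : B₁ = (P ++ B₂') ++ D) (hB₂ : B₂ = B₂' ++ D)
    (hW : W = Q ++ B₂) (hWB₁ : B₁ = R ++ W)
    (hclose : (1 - ε) * Λ (P ++ B₂') < Λ B₂') :
    (1 / (c * C * (1 + ε))) * Λ B₂ ≤ f W ∧
    f W ≤ c * d * C * ((1 + ε) / (1 - ε) ^ 2) * Λ B₂ := by
  have hK : 0 < (1 + ε) * C := by positivity
  have h1ε : 0 < 1 - ε := by linarith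
  constructor
  · rw [one_div_mul_eq_div, div_le_iff₀ (by positivity), hW]
    calc Λ B₂ ≤ (1 + ε) * C * f B₂ := (happrox B₂).2
      _ ≤ (1 + ε) * C * (c * f (Q ++ B₂)) := mul_le_mul_of_nonneg_left (hmono Q B₂) hK.le
      _ = f (Q ++ B₂) * (c * C * (1 + ε)) := by ring
  · have hweaken : 1 / (1 - ε) ≤ 1 / (1 - ε) ^ 2 :=
      one_div_le_one_div_of_le (by positivity) (by nlinarith)
    have hscale : 0 ≤ c * d * C * (1 + ε) * Λ B₂ :=
      mul_nonneg (mul_nonneg (mul_nonneg (mul_nonneg (by linarith) (by linarith)) (by linarith))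
        (by linarith)) ((hnonneg B₂).trans (happrox B₂).1)
    calc f W ≤ c * f B₁ := hWB₁ ▸ hmono R W
      _ ≤ c * (d * ((1 + ε) * C) / (1 - ε) * Λ B₂) := by
        rw [hB₁, hB₂]
        exact mul_le_mul_of_nonneg_left
          (le_div_mul_approx_of_close (by linarith) hK (by linarith) hsmooth happrox hclose)
          (by linarith)
      _ = c * d * C * (1 + ε) * Λ B₂ * (1 / (1 - ε)) := by ring
      _ ≤ c * d * C * (1 + ε) * Λ B₂ * (1 / (1 - ε) ^ 2) :=
        mul_le_mul_of_nonneg_left hweaken hscale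
      _ = c * d * C * ((1 + ε) / (1 - ε) ^ 2) * Λ B₂ := by ring
end
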